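/- arXiv:2601.00337 — 6 statements merged into one kernel-verified Lean document; each statement's English description precedes it below -/
import Mathlib

section
/- Let ρ₀ = |0⟩⟨0| and ρ₁ = |1⟩⟨1| be orthogonal qubit states, and let A₁₂ be the channel with A₁₂(ρ₀) = |Φ⁺⟩⟨Φ⁺| and A₁₂(ρ₁) = |Φ⁻⟩⟨Φ⁻|, where |Φ^±⟩ = (|00⟩ ± |11⟩)/√2 are Bell states. Then: (1) the partial traces over either output subsystem satisfy Tr_B A₁₂(ρ₀) = Tr_B A₁₂(ρ₁) = I/2 and Tr_A A₁₂(ρ₀) = Tr_A A₁₂(ρ₁) = I/2, so each marginal channel is (0,0)-QDP; and (2) for the measurement operator M = |Φ⁺⟩⟨Φ⁺|, Tr(M A₁₂(ρ₀)) = 1 and Tr(M A₁₂(ρ₁)) = 0, so A₁₂ is not (ε,δ)-QDP for any ε ≥ 0 and δ < 1. -/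
open Matrix BigOperators
open scoped ComplexOrder

namespace QDPNoGo

/-- `|0⟩` on a qubit. -/
def e0 : Fin 2 → ℂ := fun i => if i = 0 then 1 else 0
/-- `|1⟩` on a qubit. -/
def e1 : Fin 2 → ℂ := fun i => if i = 1 then 1 else 0

/-- `ρ₀ = |0⟩⟨0|`. -/
def ρ0 : Matrix (Fin 2) (Fin 2) ℂ := Matrix.vecMulVec e0 (fun j => star (e0 j))
/-- `ρ₁ = |1⟩⟨1|`. -/
def ρ1 : Matrix (Fin 2) (Fin 2) ℂ := Matrix.vecMulVec e1 (fun j => star (e1 j))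

/-- The Bell vector `|Φ⁺⟩ = (|00⟩ + |11⟩)/√2`. -/
noncomputable def bellP : Fin 2 × Fin 2 → ℂ :=
  fun p => if p.1 = p.2 then ((Real.sqrt 2)⁻¹ : ℝ) else 0

/-- The Bell vector `|Φ⁻⟩ = (|00⟩ − |11⟩)/√2`. -/
noncomputable def bellM : Fin 2 × Fin 2 → ℂ :=
  fun p =>
    if p.1 = 0 ∧ p.2 = 0 then ((Real.sqrt 2)⁻¹ : ℝ)
    else if p.1 = 1 ∧ p.2 = 1 then -((Real.sqrt 2)⁻¹ : ℝ) else 0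

/-- `|Φ⁺⟩⟨Φ⁺|`. -/
noncomputable def PhiP : Matrix (Fin 2 × Fin 2) (Fin 2 × Fin 2) ℂ :=
  Matrix.vecMulVec bellP (fun q => star (bellP q))

/-- `|Φ⁻⟩⟨Φ⁻|`. -/
noncomputable def PhiM : Matrix (Fin 2 × Fin 2) (Fin 2 × Fin 2) ℂ :=
  Matrix.vecMulVec bellM (fun q => star (bellM q))

/-- Partial trace over the second (B) subsystem. -/
noncomputable def ptrB (M : Matrix (Fin 2 × Fin 2) (Fin 2 × Fin 2) ℂ) :
    Matrix (Fin 2) (Fin 2) ℂ :=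
  Matrix.of fun i i' => ∑ j : Fin 2, M (i, j) (i', j)

/-- Partial trace over the first (A) subsystem. -/
noncomputable def ptrA (M : Matrix (Fin 2 × Fin 2) (Fin 2 × Fin 2) ℂ) :
    Matrix (Fin 2) (Fin 2) ℂ :=
  Matrix.of fun i i' => ∑ j : Fin 2, M (j, i) (j, i')


/-!
Both Bell states have the form `∑ᵢ cᵢ |i i⟩` with `|cᵢ|² = 1/2`, so all their one-party marginals
are `I/2`. Yet they are orthogonal unit vectors, so the projection `M = |Φ⁺⟩⟨Φ⁺|` is a test with
`0 ⪯ M ⪯ I`, `Tr(M Φ⁺) = 1` and `Tr(M Φ⁻) = 0`; the QDP inequality for it would force `1 ≤ δ`.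
-/

theorem trace_vecMulVec_mul_vecMulVec {n R : Type*} [Fintype n] [CommSemiring R]
    (u v w x : n → R) :
    (vecMulVec u v * vecMulVec w x).trace = (v ⬝ᵥ w) * (x ⬝ᵥ u) := by
  rw [vecMulVec_mul_vecMulVec, trace_vecMulVec, dotProduct_smul, smul_eq_mul, dotProduct_comm u]

theorem isStarProjection_vecMulVec_self_star {n R : Type*} [Fintype n] [CommRing R] [StarRing R]
    {v : n → R} (hv : star v ⬝ᵥ v = 1) : IsStarProjection (vecMulVec v (star v)) where
  isIdempotentElem := by rw [IsIdempotentElem, vecMulVec_mul_vecMulVec, hv, one_smul]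
  isSelfAdjoint := by rw [IsSelfAdjoint, star_eq_conjTranspose, conjTranspose_vecMulVec, star_star]

open scoped MatrixOrder in
theorem posSemidef_one_sub_vecMulVec_self_star {n 𝕜 : Type*} [Fintype n] [DecidableEq n]
    [RCLike 𝕜] {v : n → 𝕜} (hv : star v ⬝ᵥ v = 1) : (1 - vecMulVec v (star v)).PosSemidef :=
  (isStarProjection_vecMulVec_self_star hv).one_sub_nonneg.posSemidef

/-- The bipartite vector `∑ᵢ cᵢ |i i⟩`. -/
def schmidtVec {ι R : Type*} [DecidableEq ι] [Zero R] (c : ι → R) : ι × ι → R :=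
  fun p => if p.1 = p.2 then c p.1 else 0

theorem star_schmidtVec_dotProduct {ι R : Type*} [Fintype ι] [DecidableEq ι] [Semiring R]
    [StarRing R] (c d : ι → R) : star (schmidtVec c) ⬝ᵥ schmidtVec d = star c ⬝ᵥ d := by
  simp [dotProduct, schmidtVec, Fintype.sum_prod_type, apply_ite star]

theorem ptrB_vecMulVec_schmidtVec (c : Fin 2 → ℂ) :
    ptrB (vecMulVec (schmidtVec c) (star (schmidtVec c))) = diagonal (c * star c) := by
  ext i i'
  rcases eq_or_ne i i' with rfl | h
  · simp [ptrB, schmidtVec, vecMulVec_apply]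
  · simp [ptrB, schmidtVec, vecMulVec_apply, h, h.symm]

theorem ptrA_vecMulVec_schmidtVec (c : Fin 2 → ℂ) :
    ptrA (vecMulVec (schmidtVec c) (star (schmidtVec c))) = diagonal (c * star c) := by
  ext i i'
  rcases eq_or_ne i i' with rfl | h
  · simp [ptrA, schmidtVec, vecMulVec_apply]
  · simp [ptrA, schmidtVec, vecMulVec_apply, h]

theorem ofReal_inv_sqrt_two_mul_self :
    (((Real.sqrt 2)⁻¹ : ℝ) : ℂ) * (((Real.sqrt 2)⁻¹ : ℝ) : ℂ) = 2⁻¹ := by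
  rw [← Complex.ofReal_mul, ← mul_inv, Real.mul_self_sqrt zero_le_two]
  push_cast; rfl

noncomputable def bellPCoeff : Fin 2 → ℂ := fun _ => ((Real.sqrt 2)⁻¹ : ℝ)

noncomputable def bellMCoeff : Fin 2 → ℂ := ![((Real.sqrt 2)⁻¹ : ℝ), -((Real.sqrt 2)⁻¹ : ℝ)]

theorem bellP_eq_schmidtVec : bellP = schmidtVec bellPCoeff := rfl

theorem bellM_eq_schmidtVec : bellM = schmidtVec bellMCoeff := by
  funext ⟨a, b⟩
  fin_cases a <;> fin_cases b <;> simp [bellM, bellMCoeff, schmidtVec]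

theorem bellPCoeff_mul_star : bellPCoeff * star bellPCoeff = fun _ => 2⁻¹ := by
  funext i
  simp [bellPCoeff, ofReal_inv_sqrt_two_mul_self, -Complex.ofReal_inv]

theorem bellMCoeff_mul_star : bellMCoeff * star bellMCoeff = fun _ => 2⁻¹ := by
  funext i
  fin_cases i <;> simp [bellMCoeff, ofReal_inv_sqrt_two_mul_self, -Complex.ofReal_inv]

theorem PhiP_eq_vecMulVec : PhiP = vecMulVec bellP (star bellP) := rfl

theorem PhiM_eq_vecMulVec : PhiM = vecMulVec bellM (star bellM) := rfl

theorem ptrB_PhiP : ptrB PhiP = (2 : ℂ)⁻¹ • 1 := by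
  rw [PhiP_eq_vecMulVec, bellP_eq_schmidtVec, ptrB_vecMulVec_schmidtVec, bellPCoeff_mul_star,
    smul_one_eq_diagonal]

theorem ptrB_PhiM : ptrB PhiM = (2 : ℂ)⁻¹ • 1 := by
  rw [PhiM_eq_vecMulVec, bellM_eq_schmidtVec, ptrB_vecMulVec_schmidtVec, bellMCoeff_mul_star,
    smul_one_eq_diagonal]

theorem ptrA_PhiP : ptrA PhiP = (2 : ℂ)⁻¹ • 1 := by
  rw [PhiP_eq_vecMulVec, bellP_eq_schmidtVec, ptrA_vecMulVec_schmidtVec, bellPCoeff_mul_star,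
    smul_one_eq_diagonal]

theorem ptrA_PhiM : ptrA PhiM = (2 : ℂ)⁻¹ • 1 := by
  rw [PhiM_eq_vecMulVec, bellM_eq_schmidtVec, ptrA_vecMulVec_schmidtVec, bellMCoeff_mul_star,
    smul_one_eq_diagonal]

theorem star_bellP_dotProduct_bellP : star bellP ⬝ᵥ bellP = 1 := by
  rw [bellP_eq_schmidtVec, star_schmidtVec_dotProduct]
  simp [dotProduct, bellPCoeff, ofReal_inv_sqrt_two_mul_self, -Complex.ofReal_inv]

theorem star_bellP_dotProduct_bellM : star bellP ⬝ᵥ bellM = 0 := by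
  rw [bellP_eq_schmidtVec, bellM_eq_schmidtVec, star_schmidtVec_dotProduct]
  simp [dotProduct, bellPCoeff, bellMCoeff]

theorem trace_PhiP_mul_PhiP : (PhiP * PhiP).trace = 1 := by
  rw [PhiP_eq_vecMulVec, trace_vecMulVec_mul_vecMulVec, star_bellP_dotProduct_bellP, one_mul]

theorem trace_PhiP_mul_PhiM : (PhiP * PhiM).trace = 0 := by
  rw [PhiP_eq_vecMulVec, PhiM_eq_vecMulVec, trace_vecMulVec_mul_vecMulVec,
    star_bellP_dotProduct_bellM, zero_mul]

theorem posSemidef_PhiP : PhiP.PosSemidef := posSemidef_vecMulVec_self_star bellP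

theorem posSemidef_one_sub_PhiP : (1 - PhiP).PosSemidef :=
  posSemidef_one_sub_vecMulVec_self_star star_bellP_dotProduct_bellP

/-- **No-go for basic composition under POVM-QDP.**
For the joint channel `A₁₂` with `A₁₂(ρ₀) = |Φ⁺⟩⟨Φ⁺|` and
`A₁₂(ρ₁) = |Φ⁻⟩⟨Φ⁻|`: (1) both marginals of both outputs equal `I/2`
(so each marginal channel is `(0,0)`-QDP), and (2) for the measurement
operator `M = |Φ⁺⟩⟨Φ⁺|` we get `Tr(M A₁₂(ρ₀)) = 1` and
`Tr(M A₁₂(ρ₁)) = 0`, so `A₁₂` is not `(ε,δ)`-QDP for any `ε ≥ 0`, `δ < 1`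
with respect to the neighboring relation `ρ₀ ∼ ρ₁`. -/
theorem no_go_basic_composition
    (A : Matrix (Fin 2) (Fin 2) ℂ → Matrix (Fin 2 × Fin 2) (Fin 2 × Fin 2) ℂ)
    (hA0 : A ρ0 = PhiP) (hA1 : A ρ1 = PhiM) :
    (ptrB (A ρ0) = (2 : ℂ)⁻¹ • 1 ∧ ptrB (A ρ1) = (2 : ℂ)⁻¹ • 1 ∧
     ptrA (A ρ0) = (2 : ℂ)⁻¹ • 1 ∧ ptrA (A ρ1) = (2 : ℂ)⁻¹ • 1) ∧
    ((PhiP * A ρ0).trace = 1 ∧ (PhiP * A ρ1).trace = 0) ∧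
    (∀ ε δ : ℝ, 0 ≤ ε → 0 ≤ δ → δ < 1 →
      ¬ (∀ M : Matrix (Fin 2 × Fin 2) (Fin 2 × Fin 2) ℂ,
          M.PosSemidef → (1 - M).PosSemidef →
          ((M * A ρ0).trace.re ≤ Real.exp ε * (M * A ρ1).trace.re + δ ∧
           (M * A ρ1).trace.re ≤ Real.exp ε * (M * A ρ0).trace.re + δ))) := by
  rw [hA0, hA1]
  refine ⟨⟨ptrB_PhiP, ptrB_PhiM, ptrA_PhiP, ptrA_PhiM⟩,
    ⟨trace_PhiP_mul_PhiP, trace_PhiP_mul_PhiM⟩, ?_⟩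
  intro ε δ _ _ hδ hQDP
  have hPhiP := (hQDP PhiP posSemidef_PhiP posSemidef_one_sub_PhiP).1
  rw [trace_PhiP_mul_PhiP, trace_PhiP_mul_PhiM] at hPhiP
  norm_num at hPhiP
  linarith

end QDPNoGo
end

section
/- Let A₁, A₂ be quantum channels such that A_i is (ε_i, δ_i)-QDP: for all neighboring ρ_i ∼ σ_i and all 0 ⪯ M_i ⪯ I, Tr(M_i A_i(ρ_i)) ≤ e^{ε_i} Tr(M_i A_i(σ_i)) + δ_i. Let ρ = ρ₁⊗ρ₂ and σ = σ₁⊗σ₂ with ρ_i ∼ σ_i. Let M be a two-outcome test on K₁⊗K₂ whose acceptance probability on product states factorizes as Tr(M(ξ₁⊗ξ₂)) = Σ_t Tr(E_t ξ₁) Tr(M_{2,t} ξ₂), where {E_t} is a POVM on K₁ and 0 ⪯ M_{2,t} ⪯ I on K₂. Then Tr(M (A₁⊗A₂)(ρ)) ≤ e^{ε₁+ε₂} Tr(M (A₁⊗A₂)(σ)) + e^{ε₂} δ₁ + δ₂. -/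
/-!
Condition on the outcome `t` of Alice's POVM `{E_t}`. With outcome probabilities
`p_t = Tr(E_t A₁(ρ₁))`, the QDP of `A₂` applied to each `M_{2,t}` and averaged over `p` gives
`Tr(M (A₁⊗A₂)(ρ)) ≤ e^{ε₂} Σ_t p_t q_t + δ₂` with `q_t = Tr(M_{2,t} A₂(σ₂)) ∈ [0, 1]`.
Now `Σ_t p_t q_t = Tr(F A₁(ρ₁))` for the single effect `F = Σ_t q_t E_t`, so the QDP of `A₁`
bounds it by `e^{ε₁} Tr(F A₁(σ₁)) + δ₁`, and `Tr(F A₁(σ₁)) = Tr(M (A₁⊗A₂)(σ))`.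
-/

open Matrix BigOperators Kronecker
open scoped ComplexOrder

namespace Matrix

variable {n ι : Type*}

theorem posSemidef_sum_smul [Fintype ι] {E : ι → Matrix n n ℂ} (hE : ∀ i, (E i).PosSemidef)
    {q : ι → ℝ} (hq : ∀ i, 0 ≤ q i) : (∑ i, q i • E i).PosSemidef :=
  posSemidef_sum _ fun i _ => (hE i).smul (hq i)

theorem posSemidef_one_sub_sum_smul [DecidableEq n] [Fintype ι] {E : ι → Matrix n n ℂ}
    (hE : ∀ i, (E i).PosSemidef) (hEsum : ∑ i, E i = 1) {q : ι → ℝ} (hq : ∀ i, q i ≤ 1) :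
    (1 - ∑ i, q i • E i).PosSemidef := by
  have h : 1 - ∑ i, q i • E i = ∑ i, (1 - q i) • E i := by
    simp only [sub_smul, one_smul, Finset.sum_sub_distrib, hEsum]
  rw [h]
  exact posSemidef_sum_smul hE fun i => sub_nonneg.mpr (hq i)

variable [Fintype n]

theorem PosSemidef.trace_mul_nonneg {A B : Matrix n n ℂ} (hA : A.PosSemidef)
    (hB : B.PosSemidef) : 0 ≤ (A * B).trace := by
  classical
  obtain ⟨C, rfl⟩ : ∃ C : Matrix n n ℂ, A = star C * C := by
    open scoped MatrixOrder in
    exact CStarAlgebra.nonneg_iff_eq_star_mul_self.mp hA.nonneg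
  rw [mul_assoc, trace_mul_comm, star_eq_conjTranspose]
  exact (hB.mul_mul_conjTranspose_same C).trace_nonneg

theorem PosSemidef.trace_mul_re_nonneg {A B : Matrix n n ℂ} (hA : A.PosSemidef)
    (hB : B.PosSemidef) : 0 ≤ (A * B).trace.re :=
  (Complex.nonneg_iff.mp (hA.trace_mul_nonneg hB)).1

theorem trace_sum_smul_mul_re [Fintype ι] (q : ι → ℝ) (E : ι → Matrix n n ℂ)
    (X : Matrix n n ℂ) :
    ((∑ i, q i • E i) * X).trace.re = ∑ i, (E i * X).trace.re * q i := by
  simp only [Finset.sum_mul, trace_sum, Complex.re_sum, smul_mul_assoc, trace_smul,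
    Complex.smul_re, smul_eq_mul, mul_comm]

variable [DecidableEq n]

theorem trace_mul_re_le_one {M ξ : Matrix n n ℂ} (hM : (1 - M).PosSemidef)
    (hξ : ξ.PosSemidef) (hξt : ξ.trace = 1) : (M * ξ).trace.re ≤ 1 := by
  have h := hM.trace_mul_re_nonneg hξ
  rw [sub_mul, one_mul, trace_sub, Complex.sub_re, hξt, Complex.one_re] at h
  linarith

theorem sum_trace_mul_re_eq_one [Fintype ι] {E : ι → Matrix n n ℂ} (hE : ∑ i, E i = 1)
    {ξ : Matrix n n ℂ} (hξt : ξ.trace = 1) : ∑ i, (E i * ξ).trace.re = 1 := by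
  rw [← Complex.re_sum, ← trace_sum, ← Finset.sum_mul, hE, one_mul, hξt, Complex.one_re]

end Matrix

def IsQDP {H K : Type*} [Fintype K] [DecidableEq K] (A : Matrix H H ℂ → Matrix K K ℂ)
    (N : Matrix H H ℂ → Matrix H H ℂ → Prop) (ε δ : ℝ) : Prop :=
  ∀ ρ σ, N ρ σ → ∀ M : Matrix K K ℂ, M.PosSemidef → (1 - M).PosSemidef →
    (M * A ρ).trace.re ≤ Real.exp ε * (M * A σ).trace.re + δ

namespace IsQDP

variable {H K ι : Type*} [Fintype K] [DecidableEq K] [Fintype ι]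
  {A : Matrix H H ℂ → Matrix K K ℂ} {N : Matrix H H ℂ → Matrix H H ℂ → Prop} {ε δ : ℝ}
  {ρ σ : Matrix H H ℂ}

theorem sum_mul_le (hA : IsQDP A N ε δ) (hN : N ρ σ) {M : ι → Matrix K K ℂ}
    (hM : ∀ i, (M i).PosSemidef) (hM' : ∀ i, (1 - M i).PosSemidef) {p : ι → ℝ}
    (hp : ∀ i, 0 ≤ p i) (hp1 : ∑ i, p i = 1) :
    ∑ i, p i * (M i * A ρ).trace.re
      ≤ Real.exp ε * ∑ i, p i * (M i * A σ).trace.re + δ :=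
  calc ∑ i, p i * (M i * A ρ).trace.re
      ≤ ∑ i, p i * (Real.exp ε * (M i * A σ).trace.re + δ) :=
        Finset.sum_le_sum fun i _ =>
          mul_le_mul_of_nonneg_left (hA ρ σ hN (M i) (hM i) (hM' i)) (hp i)
    _ = Real.exp ε * ∑ i, p i * (M i * A σ).trace.re + δ * ∑ i, p i := by
        rw [Finset.mul_sum, Finset.mul_sum, ← Finset.sum_add_distrib]
        exact Finset.sum_congr rfl fun i _ => by ring
    _ = Real.exp ε * ∑ i, p i * (M i * A σ).trace.re + δ := by rw [hp1, mul_one]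

theorem sum_povm_mul_le (hA : IsQDP A N ε δ) (hN : N ρ σ) {E : ι → Matrix K K ℂ}
    (hE : ∀ i, (E i).PosSemidef) (hEsum : ∑ i, E i = 1) {q : ι → ℝ}
    (hq : ∀ i, 0 ≤ q i) (hq1 : ∀ i, q i ≤ 1) :
    ∑ i, (E i * A ρ).trace.re * q i
      ≤ Real.exp ε * ∑ i, (E i * A σ).trace.re * q i + δ := by
  simpa only [trace_sum_smul_mul_re] using
    hA ρ σ hN _ (posSemidef_sum_smul hE hq) (posSemidef_one_sub_sum_smul hE hEsum hq1)

end IsQDP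

theorem oneWayLOCC_basic_composition_general
    {H₁ H₂ K₁ K₂ : Type*}
    [Fintype H₁] [DecidableEq H₁] [Fintype H₂] [DecidableEq H₂]
    [Fintype K₁] [DecidableEq K₁] [Fintype K₂] [DecidableEq K₂]
    (A₁ : Matrix H₁ H₁ ℂ → Matrix K₁ K₁ ℂ)
    (A₂ : Matrix H₂ H₂ ℂ → Matrix K₂ K₂ ℂ)
    (N₁ : Matrix H₁ H₁ ℂ → Matrix H₁ H₁ ℂ → Prop)
    (N₂ : Matrix H₂ H₂ ℂ → Matrix H₂ H₂ ℂ → Prop)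
    (ε₁ ε₂ δ₁ δ₂ : ℝ)
    -- each channel maps density operators to density operators
    (hA₁state : ∀ ρ : Matrix H₁ H₁ ℂ, ρ.PosSemidef → ρ.trace = 1 →
      (A₁ ρ).PosSemidef ∧ (A₁ ρ).trace = 1)
    (hA₂state : ∀ ρ : Matrix H₂ H₂ ℂ, ρ.PosSemidef → ρ.trace = 1 →
      (A₂ ρ).PosSemidef ∧ (A₂ ρ).trace = 1)
    -- `A₁` is `(ε₁,δ₁)`-QDP
    (hQDP₁ : ∀ ρ σ : Matrix H₁ H₁ ℂ, N₁ ρ σ →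
      ∀ M₁ : Matrix K₁ K₁ ℂ, M₁.PosSemidef → (1 - M₁).PosSemidef →
        (M₁ * A₁ ρ).trace.re ≤ Real.exp ε₁ * (M₁ * A₁ σ).trace.re + δ₁)
    -- `A₂` is `(ε₂,δ₂)`-QDP
    (hQDP₂ : ∀ ρ σ : Matrix H₂ H₂ ℂ, N₂ ρ σ →
      ∀ M₂ : Matrix K₂ K₂ ℂ, M₂.PosSemidef → (1 - M₂).PosSemidef →
        (M₂ * A₂ ρ).trace.re ≤ Real.exp ε₂ * (M₂ * A₂ σ).trace.re + δ₂)
    -- product neighboring states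
    (ρ₁ σ₁ : Matrix H₁ H₁ ℂ) (ρ₂ σ₂ : Matrix H₂ H₂ ℂ)
    (hρ₁ : ρ₁.PosSemidef) (hρ₁t : ρ₁.trace = 1)
    (hσ₁ : σ₁.PosSemidef) (hσ₁t : σ₁.trace = 1)
    (hρ₂ : ρ₂.PosSemidef) (hρ₂t : ρ₂.trace = 1)
    (hσ₂ : σ₂.PosSemidef) (hσ₂t : σ₂.trace = 1)
    (hN₁ : N₁ ρ₁ σ₁) (hN₂ : N₂ ρ₂ σ₂)
    -- the one-way LOCC test `M`
    (M : Matrix (K₁ × K₂) (K₁ × K₂) ℂ)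
    {T : Type*} [Fintype T]
    (E : T → Matrix K₁ K₁ ℂ) (M₂ : T → Matrix K₂ K₂ ℂ)
    (hE : ∀ t, (E t).PosSemidef) (hEsum : ∑ t, E t = 1)
    (hM₂ : ∀ t, (M₂ t).PosSemidef) (hM₂' : ∀ t, (1 - M₂ t).PosSemidef)
    (hfac : ∀ (ξ₁ : Matrix K₁ K₁ ℂ) (ξ₂ : Matrix K₂ K₂ ℂ),
      ξ₁.PosSemidef → ξ₁.trace = 1 → ξ₂.PosSemidef → ξ₂.trace = 1 →
      (M * (ξ₁ ⊗ₖ ξ₂)).trace.re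
        = ∑ t, (E t * ξ₁).trace.re * (M₂ t * ξ₂).trace.re) :
    (M * (A₁ ρ₁ ⊗ₖ A₂ ρ₂)).trace.re
      ≤ Real.exp (ε₁ + ε₂) * (M * (A₁ σ₁ ⊗ₖ A₂ σ₂)).trace.re
        + Real.exp ε₂ * δ₁ + δ₂ := by
  obtain ⟨hX₁, hX₁t⟩ := hA₁state ρ₁ hρ₁ hρ₁t
  obtain ⟨hY₁, hY₁t⟩ := hA₁state σ₁ hσ₁ hσ₁t
  obtain ⟨hX₂, hX₂t⟩ := hA₂state ρ₂ hρ₂ hρ₂t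
  obtain ⟨hY₂, hY₂t⟩ := hA₂state σ₂ hσ₂ hσ₂t
  rw [hfac _ _ hX₁ hX₁t hX₂ hX₂t, hfac _ _ hY₁ hY₁t hY₂ hY₂t]
  have hA₂step := IsQDP.sum_mul_le hQDP₂ hN₂ hM₂ hM₂'
    (fun t => (hE t).trace_mul_re_nonneg hX₁) (sum_trace_mul_re_eq_one hEsum hX₁t)
  have hA₁step := IsQDP.sum_povm_mul_le hQDP₁ hN₁ hE hEsum
    (fun t => (hM₂ t).trace_mul_re_nonneg hY₂) (fun t => trace_mul_re_le_one (hM₂' t) hY₂ hY₂t)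
  calc _ ≤ _ := hA₂step
    _ ≤ Real.exp ε₂ * (Real.exp ε₁ * _ + δ₁) + δ₂ := by gcongr
    _ = _ := by rw [Real.exp_add]; ring

/-- **Tensor-product composition on product neighbors against one-way LOCC
tests.** If `A₁` is `(ε₁,δ₁)`-QDP and `A₂` is `(ε₂,δ₂)`-QDP (with respect to
neighbor relations `N₁, N₂`), both map density operators to density operators,
`ρ = ρ₁⊗ρ₂` and `σ = σ₁⊗σ₂` are product neighbors, and `M` is a two-outcome
test on `K₁⊗K₂` whose acceptance probability on product states factorizes as
`Tr(M(ξ₁⊗ξ₂)) = Σ_t Tr(E_t ξ₁) Tr(M_{2,t} ξ₂)` for a POVM `{E_t}` on `K₁` and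
operators `0 ⪯ M_{2,t} ⪯ I` on `K₂`, then
`Tr(M (A₁⊗A₂)(ρ)) ≤ e^{ε₁+ε₂} Tr(M (A₁⊗A₂)(σ)) + e^{ε₂} δ₁ + δ₂`. -/
theorem oneWayLOCC_basic_composition
    {H₁ H₂ K₁ K₂ : Type*}
    [Fintype H₁] [DecidableEq H₁] [Fintype H₂] [DecidableEq H₂]
    [Fintype K₁] [DecidableEq K₁] [Fintype K₂] [DecidableEq K₂]
    (A₁ : Matrix H₁ H₁ ℂ → Matrix K₁ K₁ ℂ)
    (A₂ : Matrix H₂ H₂ ℂ → Matrix K₂ K₂ ℂ)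
    (N₁ : Matrix H₁ H₁ ℂ → Matrix H₁ H₁ ℂ → Prop)
    (N₂ : Matrix H₂ H₂ ℂ → Matrix H₂ H₂ ℂ → Prop)
    (ε₁ ε₂ δ₁ δ₂ : ℝ) (hδ₁ : 0 ≤ δ₁) (hδ₂ : 0 ≤ δ₂)
    -- each channel maps density operators to density operators
    (hA₁state : ∀ ρ : Matrix H₁ H₁ ℂ, ρ.PosSemidef → ρ.trace = 1 →
      (A₁ ρ).PosSemidef ∧ (A₁ ρ).trace = 1)
    (hA₂state : ∀ ρ : Matrix H₂ H₂ ℂ, ρ.PosSemidef → ρ.trace = 1 →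
      (A₂ ρ).PosSemidef ∧ (A₂ ρ).trace = 1)
    -- `A₁` is `(ε₁,δ₁)`-QDP
    (hQDP₁ : ∀ ρ σ : Matrix H₁ H₁ ℂ, N₁ ρ σ →
      ∀ M₁ : Matrix K₁ K₁ ℂ, M₁.PosSemidef → (1 - M₁).PosSemidef →
        (M₁ * A₁ ρ).trace.re ≤ Real.exp ε₁ * (M₁ * A₁ σ).trace.re + δ₁)
    -- `A₂` is `(ε₂,δ₂)`-QDP
    (hQDP₂ : ∀ ρ σ : Matrix H₂ H₂ ℂ, N₂ ρ σ →
      ∀ M₂ : Matrix K₂ K₂ ℂ, M₂.PosSemidef → (1 - M₂).PosSemidef →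
        (M₂ * A₂ ρ).trace.re ≤ Real.exp ε₂ * (M₂ * A₂ σ).trace.re + δ₂)
    -- product neighboring states
    (ρ₁ σ₁ : Matrix H₁ H₁ ℂ) (ρ₂ σ₂ : Matrix H₂ H₂ ℂ)
    (hρ₁ : ρ₁.PosSemidef) (hρ₁t : ρ₁.trace = 1)
    (hσ₁ : σ₁.PosSemidef) (hσ₁t : σ₁.trace = 1)
    (hρ₂ : ρ₂.PosSemidef) (hρ₂t : ρ₂.trace = 1)
    (hσ₂ : σ₂.PosSemidef) (hσ₂t : σ₂.trace = 1)
    (hN₁ : N₁ ρ₁ σ₁) (hN₂ : N₂ ρ₂ σ₂)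
    -- the one-way LOCC test `M`
    (M : Matrix (K₁ × K₂) (K₁ × K₂) ℂ)
    (hM : M.PosSemidef) (hM' : (1 - M).PosSemidef)
    {T : Type*} [Fintype T]
    (E : T → Matrix K₁ K₁ ℂ) (M₂ : T → Matrix K₂ K₂ ℂ)
    (hE : ∀ t, (E t).PosSemidef) (hEsum : ∑ t, E t = 1)
    (hM₂ : ∀ t, (M₂ t).PosSemidef) (hM₂' : ∀ t, (1 - M₂ t).PosSemidef)
    (hfac : ∀ (ξ₁ : Matrix K₁ K₁ ℂ) (ξ₂ : Matrix K₂ K₂ ℂ),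
      ξ₁.PosSemidef → ξ₁.trace = 1 → ξ₂.PosSemidef → ξ₂.trace = 1 →
      (M * (ξ₁ ⊗ₖ ξ₂)).trace.re
        = ∑ t, (E t * ξ₁).trace.re * (M₂ t * ξ₂).trace.re) :
    (M * (A₁ ρ₁ ⊗ₖ A₂ ρ₂)).trace.re
      ≤ Real.exp (ε₁ + ε₂) * (M * (A₁ σ₁ ⊗ₖ A₂ σ₂)).trace.re
        + Real.exp ε₂ * δ₁ + δ₂ :=
  oneWayLOCC_basic_composition_general A₁ A₂ N₁ N₂ ε₁ ε₂ δ₁ δ₂ hA₁state hA₂state hQDP₁ hQDP₂ ρ₁ σ₁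
    ρ₂ σ₂ hρ₁ hρ₁t hσ₁ hσ₁t hρ₂ hρ₂t hσ₂ hσ₂t hN₁ hN₂ M E M₂ hE hEsum hM₂ hM₂' hfac
end

section
/- Let ρ, σ be density operators on a finite-dimensional Hilbert space with supp(ρ) ⊆ supp(σ), and set X := σ^{-1/2} ρ σ^{-1/2}. Fix α > 1 and suppose Tr(σ X^α) ≤ e^{(α-1)ε} for some ε ≥ 0. Then for every finite POVM {M_z} with induced distributions p_z = Tr(M_z ρ), q_z = Tr(M_z σ), the classical Rényi divergence satisfies D_α(p‖q) := (1/(α-1)) log Σ_z p_z^α q_z^{1-α} ≤ ε. -/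
open Matrix BigOperators
open scoped ComplexOrder

/-- Real power of a Hermitian matrix via the functional calculus
(junk value `0` on non-Hermitian inputs). -/
noncomputable def mrpow {n : Type*} [Fintype n] [DecidableEq n]
    (X : Matrix n n ℂ) (t : ℝ) : Matrix n n ℂ :=
  if h : X.IsHermitian then
    (h.eigenvectorUnitary : Matrix n n ℂ) *
      Matrix.diagonal (fun i => ((h.eigenvalues i ^ t : ℝ) : ℂ)) *
      star (h.eigenvectorUnitary : Matrix n n ℂ)
  else 0

/-!
Put `S = σ^{1/2}` and `B_z = S M_z S`. The support condition gives `ρ = S X S`, hence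
`p_z = Tr(B_z X)`, `q_z = Tr B_z`, and `∑ B_z = σ`. In an eigenbasis of `X`, `Tr(B_z f(X))` is
`∑ᵢ c_{z,i} f(λᵢ)` with weights `c_{z,i} ≥ 0`, so the weighted Hölder inequality gives
`p_z^α q_z^{1-α} ≤ Tr(B_z X^α)`. Summing over `z` bounds the Rényi sum by
`Tr(σ X^α) ≤ e^{(α-1)ε}`.
-/

open Unitary

theorem Real.sum_mul_rpow_mul_sum_rpow_one_sub_le {ι : Type*} (s : Finset ι) {p : ℝ}
    (hp : 1 < p) (w f : ι → ℝ) (hw : ∀ i, 0 ≤ w i) (hf : ∀ i, 0 ≤ f i) :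
    (∑ i ∈ s, w i * f i) ^ p * (∑ i ∈ s, w i) ^ (1 - p) ≤ ∑ i ∈ s, w i * f i ^ p := by
  have holder := Real.inner_le_weight_mul_Lp_of_nonneg s hp.le w f hw hf
  set a := ∑ i ∈ s, w i * f i
  set W := ∑ i ∈ s, w i
  set b := ∑ i ∈ s, w i * f i ^ p
  have ha : 0 ≤ a := Finset.sum_nonneg fun i _ => mul_nonneg (hw i) (hf i)
  have hb : 0 ≤ b := Finset.sum_nonneg fun i _ => mul_nonneg (hw i) (by positivity [hf i])
  obtain hW | hW : 0 = W ∨ 0 < W := (Finset.sum_nonneg fun i _ => hw i).eq_or_lt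
  · have hp' : 1 - p⁻¹ ≠ 0 := by
      have : p⁻¹ < 1 := inv_lt_one_of_one_lt₀ hp
      linarith
    rw [← hW, Real.zero_rpow hp', zero_mul] at holder
    rw [le_antisymm holder ha, Real.zero_rpow (by linarith), zero_mul]
    exact hb
  · calc a ^ p * W ^ (1 - p) ≤ (W ^ (1 - p⁻¹) * b ^ p⁻¹) ^ p * W ^ (1 - p) := by gcongr
      _ = b := by
        rw [Real.mul_rpow (by positivity) (by positivity), ← Real.rpow_mul hW.le,
          ← Real.rpow_mul hb, inv_mul_cancel₀ (by linarith), Real.rpow_one, mul_right_comm,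
          ← Real.rpow_add hW, show (1 - p⁻¹) * p + (1 - p) = 0 by field_simp; ring,
          Real.rpow_zero, one_mul]

theorem Matrix.mul_eq_self_of_ker_le {n R : Type*} [Fintype n] [Ring R] {A B P : Matrix n n R}
    (hker : ∀ v, A *ᵥ v = 0 → B *ᵥ v = 0) (hAP : A * P = A) : B * P = B := by
  refine ext_iff_mulVec.mpr fun v => sub_eq_zero.mp ?_
  rw [← mulVec_mulVec, ← mulVec_sub]
  exact hker _ (by rw [mulVec_sub, mulVec_mulVec, hAP, sub_self])

theorem Matrix.PosSemidef.re_unitary_conj_diag_nonneg {n : Type*} [Fintype n]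
    {B : Matrix n n ℂ} (hB : B.PosSemidef) (U : Matrix n n ℂ) (i : n) :
    0 ≤ ((star U * B * U) i i).re :=
  (Complex.nonneg_iff.mp (hB.conjTranspose_mul_mul_same U).diag_nonneg).1

section mrpow

variable {n : Type*} [Fintype n] [DecidableEq n]

theorem Matrix.IsHermitian.mrpow_eq {X : Matrix n n ℂ} (hX : X.IsHermitian) (t : ℝ) :
    mrpow X t = conjStarAlgAut ℂ _ hX.eigenvectorUnitary
      (diagonal fun i => ((hX.eigenvalues i ^ t : ℝ) : ℂ)) :=
  dif_pos hX

theorem Matrix.IsHermitian.mrpow_one {X : Matrix n n ℂ} (hX : X.IsHermitian) :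
    mrpow X 1 = X := by
  rw [hX.mrpow_eq]
  conv_rhs => rw [hX.spectral_theorem]
  simp only [Real.rpow_one]
  rfl

theorem Matrix.PosSemidef.mrpow_mul_mrpow {X : Matrix n n ℂ} (hX : X.PosSemidef) {s t : ℝ}
    (hst : s + t ≠ 0) : mrpow X s * mrpow X t = mrpow X (s + t) := by
  simp only [hX.isHermitian.mrpow_eq, ← map_mul, diagonal_mul_diagonal, ← Complex.ofReal_mul,
    ← Real.rpow_add' (hX.eigenvalues_nonneg _) hst]

theorem Matrix.isHermitian_mrpow (X : Matrix n n ℂ) (t : ℝ) : (mrpow X t).IsHermitian := by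
  by_cases hX : X.IsHermitian
  · rw [hX.mrpow_eq, IsHermitian, ← star_eq_conjTranspose, ← map_star, star_eq_conjTranspose,
      diagonal_conjTranspose]
    congr 2
    ext i
    simp
  · simp [mrpow, hX]

theorem Matrix.PosSemidef.mrpow_half_mul_self {σ : Matrix n n ℂ} (hσ : σ.PosSemidef) :
    mrpow σ (1 / 2) * mrpow σ (1 / 2) = σ := by
  rw [hσ.mrpow_mul_mrpow (by norm_num)]
  norm_num [hσ.isHermitian.mrpow_one]

theorem Matrix.PosSemidef.mrpow_half_mul_sandwich_mul_mrpow_half {ρ σ : Matrix n n ℂ}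
    (hρ : ρ.IsHermitian) (hσ : σ.PosSemidef) (hsupp : ∀ v, σ *ᵥ v = 0 → ρ *ᵥ v = 0) :
    mrpow σ (1 / 2) * (mrpow σ (-(1 / 2)) * ρ * mrpow σ (-(1 / 2))) * mrpow σ (1 / 2)
      = ρ := by
  set S := mrpow σ (1 / 2)
  set w := mrpow σ (-(1 / 2))
  have hσwS : σ * (w * S) = σ := by
    rw [← Matrix.mul_assoc]
    nth_rw 1 [← hσ.isHermitian.mrpow_one]
    rw [hσ.mrpow_mul_mrpow (by norm_num), hσ.mrpow_mul_mrpow (by norm_num)]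
    norm_num [hσ.isHermitian.mrpow_one]
  -- `0 ^ t = 0` for `t ≠ 0`, so `w * S` is only the support projection of `σ`.
  have hρwS : ρ * (w * S) = ρ := mul_eq_self_of_ker_le hsupp hσwS
  have hSH : Sᴴ = S := (isHermitian_mrpow σ _).eq
  have hwH : wᴴ = w := (isHermitian_mrpow σ _).eq
  have hSwρ : S * w * ρ = ρ := by
    simpa only [conjTranspose_mul, hρ.eq, hSH, hwH, Matrix.mul_assoc]
      using congrArg (·ᴴ) hρwS
  calc S * (w * ρ * w) * S = S * w * ρ * (w * S) := by simp only [Matrix.mul_assoc]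
    _ = ρ := by rw [hSwρ, hρwS]

theorem Matrix.re_trace_mul_unitary_conj_diagonal (B : Matrix n n ℂ)
    (U : unitary (Matrix n n ℂ)) (f : n → ℝ) :
    (B * conjStarAlgAut ℂ _ U (diagonal fun i => (f i : ℂ))).trace.re
      = ∑ i, ((star (U : Matrix n n ℂ) * B * U) i i).re * f i := by
  rw [conjStarAlgAut_apply, ← Matrix.mul_assoc, ← Matrix.mul_assoc, trace_mul_cycle,
    ← Matrix.mul_assoc]
  simp [trace, mul_diagonal, Complex.re_sum]

theorem Matrix.PosSemidef.re_trace_mul_nonneg {X B : Matrix n n ℂ} (hX : X.PosSemidef)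
    (hB : B.PosSemidef) : 0 ≤ (B * X).trace.re := by
  rw [hX.isHermitian.spectral_theorem]
  exact (re_trace_mul_unitary_conj_diagonal B _ _).symm ▸ Finset.sum_nonneg fun i _ =>
    mul_nonneg (hB.re_unitary_conj_diag_nonneg _ i) (hX.eigenvalues_nonneg i)

theorem Matrix.PosSemidef.re_trace_mul_rpow_le_re_trace_mul_mrpow {X B : Matrix n n ℂ}
    (hX : X.PosSemidef) (hB : B.PosSemidef) {α : ℝ} (hα : 1 < α) :
    (B * X).trace.re ^ α * B.trace.re ^ (1 - α) ≤ (B * mrpow X α).trace.re := by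
  set V := hX.isHermitian.eigenvectorUnitary
  set c : n → ℝ := fun i => ((star (V : Matrix n n ℂ) * B * V) i i).re
  have hp : (B * X).trace.re = ∑ i, c i * hX.isHermitian.eigenvalues i := by
    conv_lhs => rw [hX.isHermitian.spectral_theorem]
    exact re_trace_mul_unitary_conj_diagonal B V _
  have hq : B.trace.re = ∑ i, c i := by
    have h1 : (1 : Matrix n n ℂ) = conjStarAlgAut ℂ _ V (diagonal fun _ => ((1 : ℝ) : ℂ)) :=
      by simp
    rw [← mul_one B, h1, re_trace_mul_unitary_conj_diagonal]
    simp_rw [mul_one]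
    rfl
  have hr : (B * mrpow X α).trace.re = ∑ i, c i * hX.isHermitian.eigenvalues i ^ α := by
    rw [hX.isHermitian.mrpow_eq, re_trace_mul_unitary_conj_diagonal]
  rw [hp, hq, hr]
  exact Real.sum_mul_rpow_mul_sum_rpow_one_sub_le Finset.univ hα c _
    (hB.re_unitary_conj_diag_nonneg _) hX.eigenvalues_nonneg

end mrpow

theorem Real.inv_mul_log_le_of_le_exp {T a ε : ℝ} (ha : 0 < a) (hε : 0 ≤ ε) (hT : 0 ≤ T)
    (h : T ≤ Real.exp (a * ε)) : a⁻¹ * Real.log T ≤ ε := by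
  rcases hT.eq_or_lt with rfl | hT
  · simpa using hε
  · rw [inv_mul_le_iff₀ ha, ← Real.log_exp (a * ε)]
    exact Real.log_le_log hT h

theorem qma_to_measured_renyi_general
    {n : Type*} [Fintype n] [DecidableEq n]
    (ρ σ : Matrix n n ℂ)
    (hρ : ρ.PosSemidef)
    (hσ : σ.PosSemidef)
    (hsupp : ∀ v : n → ℂ, σ.mulVec v = 0 → ρ.mulVec v = 0)
    (α ε : ℝ) (hα : 1 < α) (hε : 0 ≤ ε)
    (hmom :
      (σ * mrpow (mrpow σ (-(1 / 2)) * ρ * mrpow σ (-(1 / 2))) α).trace.re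
        ≤ Real.exp ((α - 1) * ε))
    {Z : Type*} [Fintype Z]
    (M : Z → Matrix n n ℂ)
    (hMpos : ∀ z, (M z).PosSemidef) (hMsum : ∑ z, M z = 1) :
    (α - 1)⁻¹ *
        Real.log (∑ z,
          ((M z * ρ).trace.re) ^ α * ((M z * σ).trace.re) ^ (1 - α))
      ≤ ε := by
  set S := mrpow σ (1 / 2)
  set X := mrpow σ (-(1 / 2)) * ρ * mrpow σ (-(1 / 2))
  have hSH : Sᴴ = S := (isHermitian_mrpow σ _).eq
  have hSS : S * S = σ := hσ.mrpow_half_mul_self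
  have hSXS : S * X * S = ρ := hσ.mrpow_half_mul_sandwich_mul_mrpow_half hρ.isHermitian hsupp
  have hX : X.PosSemidef := by
    simpa only [(isHermitian_mrpow σ _).eq] using hρ.conjTranspose_mul_mul_same (mrpow σ _)
  have jensen : ∀ z, (M z * ρ).trace.re ^ α * (M z * σ).trace.re ^ (1 - α)
      ≤ (S * M z * S * mrpow X α).trace.re := fun z => by
    have hp : (M z * ρ).trace = (S * M z * S * X).trace := by
      rw [← hSXS, ← Matrix.mul_assoc, ← Matrix.mul_assoc, trace_mul_cycle]
      simp only [Matrix.mul_assoc]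
    have hq : (M z * σ).trace = (S * M z * S).trace := by
      rw [← hSS, ← Matrix.mul_assoc, trace_mul_cycle]
    rw [hp, hq]
    exact hX.re_trace_mul_rpow_le_re_trace_mul_mrpow (by
      simpa only [hSH] using (hMpos z).mul_mul_conjTranspose_same S) hα
  have hsum : ∑ z, (S * M z * S * mrpow X α).trace.re = (σ * mrpow X α).trace.re := by
    rw [← Complex.re_sum, ← trace_sum, ← Finset.sum_mul, ← Finset.sum_mul,
      ← Finset.mul_sum, hMsum, Matrix.mul_one, hSS]
  refine Real.inv_mul_log_le_of_le_exp (by linarith) hε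
    (Finset.sum_nonneg fun z _ => mul_nonneg ?_ ?_) ?_
  · exact Real.rpow_nonneg (hρ.re_trace_mul_nonneg (hMpos z)) _
  · exact Real.rpow_nonneg (hσ.re_trace_mul_nonneg (hMpos z)) _
  · exact (Finset.sum_le_sum fun z _ => jensen z).trans (hsum.trans_le hmom)

/-- **Quantum moments accountant ⟹ measured Rényi bound.**
Let `ρ, σ` be density operators with `supp ρ ⊆ supp σ`, let
`X = σ^{-1/2} ρ σ^{-1/2}`, fix `α > 1` and suppose
`Tr(σ X^α) ≤ e^{(α−1)ε}`.  Then for every finite POVM `{M_z}` with induced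
distributions `p_z = Tr(M_z ρ)`, `q_z = Tr(M_z σ)`, the classical Rényi
divergence satisfies `D_α(p‖q) ≤ ε`. -/
theorem qma_to_measured_renyi
    {n : Type*} [Fintype n] [DecidableEq n]
    (ρ σ : Matrix n n ℂ)
    (hρ : ρ.PosSemidef) (hρt : ρ.trace = 1)
    (hσ : σ.PosSemidef) (hσt : σ.trace = 1)
    (hsupp : ∀ v : n → ℂ, σ.mulVec v = 0 → ρ.mulVec v = 0)
    (α ε : ℝ) (hα : 1 < α) (hε : 0 ≤ ε)
    (hmom :
      (σ * mrpow (mrpow σ (-(1 / 2)) * ρ * mrpow σ (-(1 / 2))) α).trace.re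
        ≤ Real.exp ((α - 1) * ε))
    {Z : Type*} [Fintype Z]
    (M : Z → Matrix n n ℂ)
    (hMpos : ∀ z, (M z).PosSemidef) (hMsum : ∑ z, M z = 1) :
    (α - 1)⁻¹ *
        Real.log (∑ z,
          ((M z * ρ).trace.re) ^ α * ((M z * σ).trace.re) ^ (1 - α))
      ≤ ε :=
  qma_to_measured_renyi_general ρ σ hρ hσ hsupp α ε hα hε hmom M hMpos hMsum
end

section
/- Let ε ∈ [0,1] and suppose for each α ∈ (1,∞) a mechanism satisfies D_α ≤ ζα where ζ := Σ_{i=1}^k ε_i²/2 > 0. Then the optimized privacy parameter ε' := min_{α>1} (ζα + log(1/δ)/(α-1)) equals ζ + 2√(ζ log(1/δ)) for δ ∈ (0,1). In particular, with ζ = Σ ε_i²/2, ε' = (1/2)Σ ε_i² + √(2 log(1/δ) Σ ε_i²). -/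
open BigOperators

/-- **Optimized Rényi order in advanced composition.**
With `ζ = (Σ_i ε_i²)/2 > 0` and `δ ∈ (0,1)`, the minimum over `α > 1` of
`ζ α + log(1/δ)/(α−1)` is attained and equals `ζ + 2√(ζ log(1/δ))`, which is
`(1/2) Σ ε_i² + √(2 log(1/δ) Σ ε_i²)`. -/
theorem optimized_privacy_parameter (k : ℕ) (ε : Fin k → ℝ) (δ : ℝ)
    (hδ0 : 0 < δ) (hδ1 : δ < 1)
    (hζ : 0 < (∑ i, ε i ^ 2) / 2) :
    IsLeast
      {x : ℝ | ∃ α : ℝ, 1 < α ∧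
        x = (∑ i, ε i ^ 2) / 2 * α + Real.log (1 / δ) / (α - 1)}
      ((∑ i, ε i ^ 2) / 2
        + 2 * Real.sqrt ((∑ i, ε i ^ 2) / 2 * Real.log (1 / δ))) ∧
    (∑ i, ε i ^ 2) / 2
        + 2 * Real.sqrt ((∑ i, ε i ^ 2) / 2 * Real.log (1 / δ))
      = (1 / 2) * (∑ i, ε i ^ 2)
        + Real.sqrt (2 * Real.log (1 / δ) * (∑ i, ε i ^ 2)) := by
  set S := (∑ i, ε i ^ 2) with hS
  set ζ := S / 2 with hζdef
  set b := Real.log (1 / δ) with hb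
  have hζpos : 0 < ζ := hζ
  have hbpos : 0 < b := Real.log_pos (one_lt_one_div hδ0 hδ1)
  set s := Real.sqrt (ζ * b) with hs
  have hs0 : 0 ≤ s := Real.sqrt_nonneg _
  have hs2 : s ^ 2 = ζ * b := Real.sq_sqrt (by positivity)
  constructor
  · constructor
    · -- membership: α = 1 + √(b/ζ)
      set t := Real.sqrt (b / ζ) with ht
      have htpos : 0 < t := Real.sqrt_pos.mpr (by positivity)
      have ht2 : t ^ 2 = b / ζ := Real.sq_sqrt (by positivity)
      refine ⟨1 + t, by linarith, ?_⟩
      have hst : s * t = b := by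
        rw [hs, ht, ← Real.sqrt_mul (by positivity)]
        rw [show ζ * b * (b / ζ) = b ^ 2 by field_simp]
        exact Real.sqrt_sq hbpos.le
      have : ζ * t + b / t = 2 * s := by
        have hb' : ζ * t ^ 2 = b := by
          rw [ht2]; field_simp
        field_simp
        nlinarith [hb', hst]
      have h1 : (1 : ℝ) + t - 1 = t := by ring
      rw [h1]
      nlinarith [this]
    · rintro x ⟨α, hα, rfl⟩
      have hu : 0 < α - 1 := by linarith
      have key : ζ * (α - 1) ^ 2 - 2 * s * (α - 1) + b ≥ 0 := by
        nlinarith [sq_nonneg (ζ * (α - 1) - s), hs2, hζpos]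
      have : ζ * (α - 1) + b / (α - 1) ≥ 2 * s := by
        rw [ge_iff_le, ← sub_nonneg]
        have : ζ * (α - 1) + b / (α - 1) - 2 * s
            = (ζ * (α - 1) ^ 2 - 2 * s * (α - 1) + b) / (α - 1) := by
          field_simp; ring
        rw [this]
        positivity
      nlinarith [this]
  · -- second equality
    have h4 : 2 * b * S = 4 * (ζ * b) := by rw [hζdef]; ring
    rw [h4, show (4 : ℝ) * (ζ * b) = 2 ^ 2 * (ζ * b) by norm_num,
      Real.sqrt_mul (by positivity), Real.sqrt_sq (by norm_num : (0:ℝ) ≤ 2)]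
    ring
end

section
/- Let p_i, q_i (i = 1,…,k) be probability distributions on finite sets Z_i with e^{-ε_i} ≤ p_i(z_i)/q_i(z_i) ≤ e^{ε_i}, let P = ∏ p_i and Q = ∏ q_i on Z = ∏ Z_i, and let L(z) = Σ_i log(p_i(z_i)/q_i(z_i)). Set μ := Σ_i D_KL(p_i‖q_i) and t := √(2 log(1/δ) Σ_i ε_i²) for δ ∈ (0,1). Then P(L > μ + t) ≤ δ. -/
/-!
Under `P = ∏ pᵢ` the log-ratios `Lᵢ(zᵢ) = log (pᵢ(zᵢ)/qᵢ(zᵢ))` are independent, have means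
`D_KL(pᵢ‖qᵢ)` and lie in `[-εᵢ, εᵢ]`. By Hoeffding's lemma each centred `Lᵢ` is sub-Gaussian with
variance proxy `εᵢ²`, so `L - μ` is sub-Gaussian with proxy `Σ εᵢ²`, and the Chernoff bound at
`t = √(2 log(1/δ) Σ εᵢ²)` is `exp (-t² / (2 Σ εᵢ²)) = δ`.
-/

open MeasureTheory ProbabilityTheory Real
open scoped NNReal ENNReal

namespace ProbabilityTheory

lemma HasSubgaussianMGF.measureReal_sqrt_log_inv_lt_le {Ω : Type*} {m : MeasurableSpace Ω}
    {μ : Measure Ω} [IsFiniteMeasure μ] {X : Ω → ℝ} {c : ℝ≥0} (h : HasSubgaussianMGF X c μ)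
    {δ : ℝ} (hδ0 : 0 < δ) (hδ1 : δ ≤ 1) :
    μ.real {ω | √(2 * log (1 / δ) * c) < X ω} ≤ δ := by
  rcases eq_or_ne c 0 with rfl | hc
  -- The Chernoff bound degenerates to `1` here, but a `0`-sub-Gaussian variable vanishes a.e.
  · have hX : X =ᵐ[μ] 0 := h.ae_eq_zero_of_hasSubgaussianMGF_zero
    have hnull : μ {ω | 0 < X ω} = 0 :=
      measure_mono_null (fun ω hω => ne_of_gt hω) (ae_iff.1 hX)
    simpa [measureReal_def, hnull] using hδ0.le
  have hlog : 0 ≤ log (1 / δ) := log_nonneg (one_le_one_div hδ0 hδ1)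
  calc μ.real {ω | √(2 * log (1 / δ) * c) < X ω}
      ≤ μ.real {ω | √(2 * log (1 / δ) * c) ≤ X ω} :=
        measureReal_mono (Set.ofPred_subset_ofPred.2 fun _ => le_of_lt)
    _ ≤ exp (-√(2 * log (1 / δ) * c) ^ 2 / (2 * c)) := h.measure_ge_le (sqrt_nonneg _)
    _ = δ := by
        rw [sq_sqrt (by positivity), one_div, log_inv]
        field_simp
        simp [exp_log hδ0]

lemma hasSubgaussianMGF_sum_sub_integral_pi {ι : Type*} [Fintype ι] {α : ι → Type*}
    [∀ i, MeasurableSpace (α i)] {μ : ∀ i, Measure (α i)} [∀ i, IsProbabilityMeasure (μ i)]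
    {f : ∀ i, α i → ℝ} (hf : ∀ i, AEMeasurable (f i) (μ i)) {a b : ι → ℝ}
    (hab : ∀ i, ∀ᵐ x ∂μ i, f i x ∈ Set.Icc (a i) (b i)) :
    HasSubgaussianMGF (fun x => ∑ i, (f i (x i) - ∫ y, f i y ∂μ i))
      (∑ i, (‖b i - a i‖₊ / 2) ^ 2) (Measure.pi μ) := by
  refine HasSubgaussianMGF.sum_of_iIndepFun
    (iIndepFun_pi (X := fun i y => f i y - ∫ y, f i y ∂μ i) fun i => (hf i).sub_const _)
    fun i _ => ?_
  have h : HasSubgaussianMGF (fun y => f i y - ∫ y, f i y ∂μ i) ((‖b i - a i‖₊ / 2) ^ 2)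
      ((Measure.pi μ).map (Function.eval i)) := by
    rw [(measurePreserving_eval μ i).map_eq]
    exact hasSubgaussianMGF_of_mem_Icc (hf i) (hab i)
  exact h.of_map (measurable_pi_apply i).aemeasurable

end ProbabilityTheory

lemma PMF.measureReal_pi_toMeasure {ι : Type*} [Fintype ι] [DecidableEq ι] {α : ι → Type*}
    [∀ i, Fintype (α i)] [∀ i, MeasurableSpace (α i)] [∀ i, MeasurableSingletonClass (α i)]
    (w : ∀ i, PMF (α i)) (s : Set (∀ i, α i)) [DecidablePred (· ∈ s)] :
    (Measure.pi fun i => (w i).toMeasure).real s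
      = ∑ x ∈ Finset.univ.filter (· ∈ s), ∏ i, (w i (x i)).toReal := by
  have hs : s = ↑(Finset.univ.filter (· ∈ s)) := by ext; simp
  nth_rw 1 [hs]
  rw [← sum_measureReal_singleton]
  refine Finset.sum_congr rfl fun x _ => ?_
  rw [measureReal_def, Measure.pi_singleton, ENNReal.toReal_prod]
  simp_rw [PMF.toMeasure_apply_singleton _ _ (measurableSet_singleton _)]

theorem hoeffding_privacy_loss_tail_general
    (k : ℕ) (Z : Fin k → Type*) [∀ i, Fintype (Z i)]
    (p q : ∀ i, Z i → ℝ) (ε : Fin k → ℝ) (δ : ℝ)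
    (hp : ∀ i z, 0 < p i z)
    (hpsum : ∀ i, ∑ z, p i z = 1)
    (hlo : ∀ i z, Real.exp (-(ε i)) ≤ p i z / q i z)
    (hhi : ∀ i z, p i z / q i z ≤ Real.exp (ε i))
    (hδ0 : 0 < δ) (hδ1 : δ < 1) :
    ∑ z ∈ Finset.univ.filter (fun z : ∀ i, Z i =>
        (∑ i, ∑ zi, p i zi * Real.log (p i zi / q i zi))
          + Real.sqrt (2 * Real.log (1 / δ) * ∑ i, ε i ^ 2)
        < ∑ i, Real.log (p i (z i) / q i (z i))),
      ∏ i, p i (z i)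
    ≤ δ := by
  let (i : Fin k) : MeasurableSpace (Z i) := ⊤
  let w (i : Fin k) : PMF (Z i) := PMF.ofFintype (fun z => ENNReal.ofReal (p i z)) <| by
    rw [← ENNReal.ofReal_sum_of_nonneg fun z _ => (hp i z).le, hpsum i, ENNReal.ofReal_one]
  have hw (i : Fin k) (z : Z i) : (w i z).toReal = p i z := ENNReal.toReal_ofReal (hp i z).le
  have hlog_mem (i : Fin k) (z : Z i) : log (p i z / q i z) ∈ Set.Icc (-ε i) (ε i) :=
    ⟨(le_log_iff_exp_le ((exp_pos _).trans_le (hlo i z))).2 (hlo i z),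
      (log_le_iff_le_exp ((exp_pos _).trans_le (hlo i z))).2 (hhi i z)⟩
  have hsub := hasSubgaussianMGF_sum_sub_integral_pi (μ := fun i => (w i).toMeasure)
    (fun i => Measurable.of_discrete.aemeasurable) fun i => ae_of_all _ (hlog_mem i)
  have tail := hsub.measureReal_sqrt_log_inv_lt_le hδ0 hδ1.le
  have hc : ((∑ i, (‖ε i - -ε i‖₊ / 2) ^ 2 : ℝ≥0) : ℝ) = ∑ i, ε i ^ 2 := by
    push_cast
    refine Finset.sum_congr rfl fun i _ => ?_
    rw [Real.norm_eq_abs, div_pow, sq_abs]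
    ring
  rw [PMF.measureReal_pi_toMeasure, hc] at tail
  convert tail using 1
  refine Finset.sum_congr ?_ fun z _ => by simp [hw]
  ext z
  simp [PMF.integral_eq_sum, hw, Finset.sum_sub_distrib, lt_sub_iff_add_lt']

/-- **Hoeffding tail bound for the total privacy loss.**
Let `p_i, q_i` be fully supported probability distributions on finite sets
`Z_i` with `e^{-ε_i} ≤ p_i/q_i ≤ e^{ε_i}`, let `P = ∏ p_i`, `Q = ∏ q_i` on the
product space, `L(z) = Σ_i log (p_i(z_i)/q_i(z_i))`,
`μ = Σ_i D_KL(p_i‖q_i)` and `t = √(2 log(1/δ) Σ_i ε_i²)` for `δ ∈ (0,1)`.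
Then `P(L > μ + t) ≤ δ`. -/
theorem hoeffding_privacy_loss_tail
    (k : ℕ) (Z : Fin k → Type*) [∀ i, Fintype (Z i)]
    (p q : ∀ i, Z i → ℝ) (ε : Fin k → ℝ) (δ : ℝ)
    (hε : ∀ i, 0 ≤ ε i)
    (hp : ∀ i z, 0 < p i z) (hq : ∀ i z, 0 < q i z)
    (hpsum : ∀ i, ∑ z, p i z = 1) (hqsum : ∀ i, ∑ z, q i z = 1)
    (hlo : ∀ i z, Real.exp (-(ε i)) ≤ p i z / q i z)
    (hhi : ∀ i z, p i z / q i z ≤ Real.exp (ε i))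
    (hδ0 : 0 < δ) (hδ1 : δ < 1) :
    ∑ z ∈ Finset.univ.filter (fun z : ∀ i, Z i =>
        (∑ i, ∑ zi, p i zi * Real.log (p i zi / q i zi))
          + Real.sqrt (2 * Real.log (1 / δ) * ∑ i, ε i ^ 2)
        < ∑ i, Real.log (p i (z i) / q i (z i))),
      ∏ i, p i (z i)
    ≤ δ :=
  hoeffding_privacy_loss_tail_general k Z p q ε δ hp hpsum hlo hhi hδ0 hδ1
end

section
/- Let p, q be probability distributions on a finite set satisfying e^{-ε} ≤ p(z)/q(z) ≤ e^{ε} for all z, where ε ≥ 0. Then D_KL(p‖q) := Σ_z p(z) log(p(z)/q(z)) ≤ ε(e^ε − 1)/(e^ε + 1). -/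
/-!
On each atom, `p z * log (p z / q z) = q z * φ (p z / q z)` with `φ x = x log x` convex, and the
ratio `p z / q z` lies in `[e^{-ε}, e^ε]`, where `φ` lies below its chord. The chord is affine, so
after weighting by `q` and summing it only sees `∑ q = ∑ p = 1`, i.e. it is evaluated at `1`;
with `φ (e^{±ε}) = ± ε e^{±ε}` this value is `ε (e^ε - 1) / (e^ε + 1)`.
-/

theorem ConvexOn.sub_mul_le_chord {𝕜 : Type*} [Field 𝕜] [LinearOrder 𝕜] [IsStrictOrderedRing 𝕜]
    {s : Set 𝕜} {f : 𝕜 → 𝕜} (hf : ConvexOn 𝕜 s f) {x y z : 𝕜} (hx : x ∈ s) (hz : z ∈ s)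
    (hxy : x ≤ y) (hyz : y ≤ z) : (z - x) * f y ≤ (z - y) * f x + (y - x) * f z := by
  rcases hxy.eq_or_lt with rfl | hxy
  · linarith
  rcases hyz.eq_or_lt with rfl | hyz
  · linarith
  exact hf.secant_mono_aux1 hx hz hxy hyz

theorem ConvexOn.sub_mul_sum_mul_div_le_chord {ι : Type*} (t : Finset ι) {s : Set ℝ} {f : ℝ → ℝ}
    (hf : ConvexOn ℝ s f) {a b : ℝ} (ha : a ∈ s) (hb : b ∈ s) {p q : ι → ℝ}
    (hq : ∀ i ∈ t, 0 < q i) (hpsum : ∑ i ∈ t, p i = 1) (hqsum : ∑ i ∈ t, q i = 1)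
    (hratio : ∀ i ∈ t, p i / q i ∈ Set.Icc a b) :
    (b - a) * ∑ i ∈ t, q i * f (p i / q i) ≤ (b - 1) * f a + (1 - a) * f b := by
  have hterm : ∀ i ∈ t, (b - a) * (q i * f (p i / q i)) ≤
      (b * q i - p i) * f a + (p i - a * q i) * f b := by
    intro i hi
    have hqi := hq i hi
    obtain ⟨hai, hib⟩ := hratio i hi
    calc (b - a) * (q i * f (p i / q i)) = q i * ((b - a) * f (p i / q i)) := by ring
      _ ≤ q i * ((b - p i / q i) * f a + (p i / q i - a) * f b) :=
        mul_le_mul_of_nonneg_left (hf.sub_mul_le_chord ha hb hai hib) hqi.le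
      _ = (b * q i - p i) * f a + (p i - a * q i) * f b := by field_simp
  calc (b - a) * ∑ i ∈ t, q i * f (p i / q i)
      ≤ ∑ i ∈ t, ((b * q i - p i) * f a + (p i - a * q i) * f b) := by
        rw [Finset.mul_sum]; exact Finset.sum_le_sum hterm
    _ = (b - 1) * f a + (1 - a) * f b := by
        simp only [Finset.sum_add_distrib, ← Finset.sum_mul, Finset.sum_sub_distrib,
          ← Finset.mul_sum, hpsum, hqsum, mul_one]

theorem kl_le_of_bounded_ratio_general
    {Z : Type*} [Fintype Z] (p q : Z → ℝ) (ε : ℝ) (hε : 0 ≤ ε)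
    (hq : ∀ z, 0 < q z)
    (hpsum : ∑ z, p z = 1) (hqsum : ∑ z, q z = 1)
    (hlo : ∀ z, Real.exp (-ε) ≤ p z / q z)
    (hhi : ∀ z, p z / q z ≤ Real.exp ε) :
    ∑ z, p z * Real.log (p z / q z)
      ≤ ε * (Real.exp ε - 1) / (Real.exp ε + 1) := by
  rcases hε.eq_or_lt with rfl | hε
  · have hratio (z : Z) : p z / q z = 1 :=
      le_antisymm (by simpa using hhi z) (by simpa using hlo z)
    simp [hratio]
  set b := Real.exp ε
  have hb : 1 < b := Real.one_lt_exp_iff.mpr hε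
  have hkl : ∑ z, p z * Real.log (p z / q z) = ∑ z, q z * (p z / q z * Real.log (p z / q z)) :=
    Finset.sum_congr rfl fun z _ => by field_simp [(hq z).ne']
  have hchord := Real.convexOn_mul_log.sub_mul_sum_mul_div_le_chord Finset.univ
    (Real.exp_pos (-ε)).le (Real.exp_pos ε).le (fun z _ => hq z) hpsum hqsum
    (fun z _ => ⟨hlo z, hhi z⟩)
  rw [← hkl, Real.log_exp, Real.log_exp, Real.exp_neg] at hchord
  have hba : 0 < b - b⁻¹ := by
    have := inv_lt_one_of_one_lt₀ hb; linarith
  refine le_of_mul_le_mul_left (hchord.trans_eq ?_) hba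
  field_simp
  ring

/-- **KL divergence bound under pointwise bounded likelihood ratio.**
If `e^{-ε} ≤ p z / q z ≤ e^{ε}` for all `z`, then
`D_KL(p‖q) ≤ ε (e^ε − 1)/(e^ε + 1)`. -/
theorem kl_le_of_bounded_ratio
    {Z : Type*} [Fintype Z] (p q : Z → ℝ) (ε : ℝ) (hε : 0 ≤ ε)
    (hp : ∀ z, 0 ≤ p z) (hq : ∀ z, 0 < q z)
    (hpsum : ∑ z, p z = 1) (hqsum : ∑ z, q z = 1)
    (hlo : ∀ z, Real.exp (-ε) ≤ p z / q z)
    (hhi : ∀ z, p z / q z ≤ Real.exp ε) :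
    ∑ z, p z * Real.log (p z / q z)
      ≤ ε * (Real.exp ε - 1) / (Real.exp ε + 1) :=
  kl_le_of_bounded_ratio_general p q ε hε hq hpsum hqsum hlo hhi
end
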